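/- The series Φ(b,z) = ₁φ₁(0; b; q², z) satisfies the three-term relation (b/z)(Φ(b,q²z) − Φ(b,z)) + Φ(b,z) + (q²/z)(Φ(b,z/q²) − Φ(b,z)) = 0. -/

import Mathlib

open scoped BigOperators

/-- The q-Pochhammer symbol (a;q)_n. -/
noncomputable def qPoch (a q : ℂ) (n : ℕ) : ℂ :=
  ∏ k ∈ Finset.range n, (1 - a * q ^ k)

/-- Φ(b,z) = ₁φ₁(0; b; q², z). -/
noncomputable def phi11zero (q b z : ℂ) : ℂ :=
  ∑' n : ℕ, (-1) ^ n * q ^ (n * (n - 1)) * z ^ n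
    / (qPoch b (q ^ 2) n * qPoch (q ^ 2) (q ^ 2) n)

/-!
Write `p = q²` and `Φ(z) = ∑ cₙ zⁿ`. The coefficients obey the first-order recurrence
`cₙ₊₁ (1 - b pⁿ)(1 - pⁿ⁺¹) = -pⁿ cₙ`. Comparing coefficients of `zⁿ`, the left-hand side of the
relation contributes `(zⁿ / pⁿ) (cₙ₊₁ (1 - b pⁿ)(1 - pⁿ⁺¹) + pⁿ cₙ)`, which vanishes by the
recurrence. Since the ratio of consecutive coefficients tends to `0`, the series converges for
every `z`, so the coefficientwise identity passes to the sums.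
-/

open Filter Topology

section ThreeTerm

variable {K : Type*} [Field K] {c : ℕ → K} {b p z : K}

theorem three_term_coeff_eq_zero (hp : p ≠ 0) (hz : z ≠ 0) {n : ℕ}
    (hD : (1 - b * p ^ n) * (1 - p ^ (n + 1)) ≠ 0)
    (hc : c (n + 1) = -p ^ n / ((1 - b * p ^ n) * (1 - p ^ (n + 1))) * c n) :
    b / z * (c (n + 1) * ((p * z) ^ (n + 1) - z ^ (n + 1))) + c n * z ^ n
      + p / z * (c (n + 1) * ((z / p) ^ (n + 1) - z ^ (n + 1))) = 0 := by
  rw [div_mul_eq_mul_div, eq_div_iff hD] at hc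
  rw [div_pow, mul_pow]
  field_simp
  linear_combination p * z ^ (n + 1) * hc

variable [TopologicalSpace K] [IsTopologicalRing K] {F : K → K}

theorem hasSum_succ_mul_pow_sub_pow {w : K} (hw : HasSum (fun n ↦ c n * w ^ n) (F w))
    (hz : HasSum (fun n ↦ c n * z ^ n) (F z)) :
    HasSum (fun n ↦ c (n + 1) * (w ^ (n + 1) - z ^ (n + 1))) (F w - F z) := by
  simpa [mul_sub] using (hasSum_nat_add_iff' 1).2 (hw.sub hz)

theorem three_term_of_hasSum [T2Space K] (hp : p ≠ 0) (hz : z ≠ 0)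
    (hD : ∀ n, (1 - b * p ^ n) * (1 - p ^ (n + 1)) ≠ 0)
    (hc : ∀ n, c (n + 1) = -p ^ n / ((1 - b * p ^ n) * (1 - p ^ (n + 1))) * c n)
    (hF : ∀ w, HasSum (fun n ↦ c n * w ^ n) (F w)) :
    b / z * (F (p * z) - F z) + F z + p / z * (F (z / p) - F z) = 0 := by
  have hsum :=
    (((hasSum_succ_mul_pow_sub_pow (hF (p * z)) (hF z)).mul_left (b / z)).add (hF z)).add
      ((hasSum_succ_mul_pow_sub_pow (hF (z / p)) (hF z)).mul_left (p / z))
  refine hsum.unique ?_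
  simpa only [three_term_coeff_eq_zero hp hz (hD _) (hc _)] using hasSum_zero

end ThreeTerm

section Convergence

variable {K : Type*} [NormedField K]

theorem summable_mul_pow_of_ratio_tendsto_zero [CompleteSpace K] {c r : ℕ → K}
    (hr : Tendsto r atTop (𝓝 0)) (hc : ∀ n, c (n + 1) = r n * c n) (w : K) :
    Summable (fun n ↦ c n * w ^ n) := by
  have hrw : ∀ᶠ n in atTop, ‖r n * w‖ ≤ 2⁻¹ := by
    have := (hr.mul_const w).norm
    rw [zero_mul, norm_zero] at this
    exact this.eventually (ge_mem_nhds (by norm_num))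
  refine summable_of_ratio_norm_eventually_le (r := 2⁻¹) (by norm_num) ?_
  filter_upwards [hrw] with n hn
  calc ‖c (n + 1) * w ^ (n + 1)‖ = ‖r n * w‖ * ‖c n * w ^ n‖ := by
        rw [hc, pow_succ, ← norm_mul]
        congr 1
        ring
    _ ≤ 2⁻¹ * ‖c n * w ^ n‖ := by gcongr

theorem tendsto_neg_pow_div_one_sub_mul_one_sub {p : K} (hp : ‖p‖ < 1) (b : K) :
    Tendsto (fun n : ℕ ↦ -p ^ n / ((1 - b * p ^ n) * (1 - p ^ (n + 1)))) atTop (𝓝 0) := by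
  have h0 := tendsto_pow_atTop_nhds_zero_of_norm_lt_one hp
  have h1 : Tendsto (fun _ : ℕ ↦ (1 : K)) atTop (𝓝 1) := tendsto_const_nhds
  simpa [pow_succ', Pi.div_def] using
    h0.neg.div ((h1.sub (h0.const_mul b)).mul (h1.sub (h0.const_mul p))) (by simp)

theorem one_sub_pow_ne_zero_of_norm_lt_one {p : K} (hp : ‖p‖ < 1) {m : ℕ} (hm : m ≠ 0) :
    1 - p ^ m ≠ 0 := by
  rw [sub_ne_zero]
  intro h
  have := congrArg norm h
  rw [norm_one, norm_pow] at this
  exact (pow_lt_one₀ (norm_nonneg p) hp hm).ne this.symm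

end Convergence

theorem qPoch_succ (a q : ℂ) (n : ℕ) : qPoch a q (n + 1) = qPoch a q n * (1 - a * q ^ n) :=
  Finset.prod_range_succ _ _

noncomputable def phi11zeroCoeff (q b : ℂ) (n : ℕ) : ℂ :=
  (-1) ^ n * q ^ (n * (n - 1)) / (qPoch b (q ^ 2) n * qPoch (q ^ 2) (q ^ 2) n)

theorem phi11zero_eq_tsum (q b w : ℂ) :
    phi11zero q b w = ∑' n, phi11zeroCoeff q b n * w ^ n :=
  tsum_congr fun n ↦ by rw [phi11zeroCoeff]; ring

theorem phi11zeroCoeff_succ (q b : ℂ) (n : ℕ) :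
    phi11zeroCoeff q b (n + 1) =
      -(q ^ 2) ^ n / ((1 - b * (q ^ 2) ^ n) * (1 - (q ^ 2) ^ (n + 1))) * phi11zeroCoeff q b n := by
  have hexp : (n + 1) * (n + 1 - 1) = n * (n - 1) + 2 * n := by
    cases n <;> simp; ring
  rw [phi11zeroCoeff, phi11zeroCoeff, qPoch_succ, qPoch_succ, hexp, pow_add, pow_mul,
    div_mul_div_comm]
  congr 1 <;> ring

/-- Three-term relation for Φ(b,z) = ₁φ₁(0;b;q²,z):
(b/z)(Φ(b,q²z) − Φ(b,z)) + Φ(b,z) + (q²/z)(Φ(b,z/q²) − Φ(b,z)) = 0. -/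
theorem phi11zero_three_term (q b z : ℂ) (hq : ‖q‖ < 1) (hq0 : q ≠ 0) (hz : z ≠ 0)
    (hb : ∀ n : ℕ, qPoch b (q ^ 2) n ≠ 0) :
    (b / z) * (phi11zero q b (q ^ 2 * z) - phi11zero q b z)
      + phi11zero q b z
      + (q ^ 2 / z) * (phi11zero q b (z / q ^ 2) - phi11zero q b z) = 0 := by
  have hq2 : ‖q ^ 2‖ < 1 := by
    rw [norm_pow]
    exact pow_lt_one₀ (norm_nonneg q) hq two_ne_zero
  have hD (n : ℕ) : (1 - b * (q ^ 2) ^ n) * (1 - (q ^ 2) ^ (n + 1)) ≠ 0 :=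
    mul_ne_zero (right_ne_zero_of_mul (qPoch_succ b (q ^ 2) n ▸ hb (n + 1)))
      (one_sub_pow_ne_zero_of_norm_lt_one hq2 n.succ_ne_zero)
  refine three_term_of_hasSum (pow_ne_zero 2 hq0) hz hD (phi11zeroCoeff_succ q b) fun w ↦ ?_
  rw [phi11zero_eq_tsum]
  exact (summable_mul_pow_of_ratio_tendsto_zero (tendsto_neg_pow_div_one_sub_mul_one_sub hq2 b)
    (phi11zeroCoeff_succ q b) w).hasSum
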